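/- arXiv:1707.07993 — 4 statements merged into one kernel-verified Lean document; each statement's English description precedes it below -/
import Mathlib

section
/- Let a, φ₁, φ₂ > 0 with φ₁ ≤ φ₂, and let φ : ℝ≥0 → ℝ be continuous with φ₁ ≤ φ ≤ φ₂. Define m(x,s,t) = 1 + x ∫_s^t φ(r)e^{a(r−s)} dr. Then for all x, y > 0 and t ≥ 0: sup_{r ≥ t} [ m(x,0,t)·m(y,t,r) / m(x,0,r) ] ≤ (1 + (x/a)φ₂)(1 + (y/a)φ₂) / min((x/a)φ₁, 1). -/
noncomputable def mFn (a : ℝ) (φ : ℝ → ℝ) (x s t : ℝ) : ℝ :=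
  1 + x * ∫ r in s..t, φ r * Real.exp (a * (r - s))

lemma int_exp (a s t : ℝ) (ha : 0 < a) :
    (∫ r in s..t, Real.exp (a * (r - s))) = (Real.exp (a * (t - s)) - 1) / a := by
  have h : ∀ u ∈ Set.uIcc s t, HasDerivAt (fun r => Real.exp (a * (r - s)) / a)
      (Real.exp (a * (u - s))) u := by
    intro u _
    have h1 : HasDerivAt (fun r : ℝ => a * (r - s)) a u := by
      simpa using ((hasDerivAt_id u).sub_const s).const_mul a
    have h2 := h1.exp.div_const a
    simpa [mul_div_assoc, div_self ha.ne'] using h2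
  rw [intervalIntegral.integral_eq_sub_of_hasDerivAt h
    ((Real.continuous_exp.comp (by continuity)).intervalIntegrable s t)]
  simp [sub_div]

lemma int_bounds (a φ₁ φ₂ : ℝ) (ha : 0 < a) (φ : ℝ → ℝ) (hcont : Continuous φ)
    (hbd : ∀ r, 0 ≤ r → φ₁ ≤ φ r ∧ φ r ≤ φ₂) (s t : ℝ) (hs : 0 ≤ s) (hst : s ≤ t) :
    φ₁ * ((Real.exp (a * (t - s)) - 1) / a) ≤ (∫ r in s..t, φ r * Real.exp (a * (r - s))) ∧
    (∫ r in s..t, φ r * Real.exp (a * (r - s))) ≤ φ₂ * ((Real.exp (a * (t - s)) - 1) / a) := by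
  have hce : Continuous (fun r : ℝ => Real.exp (a * (r - s))) :=
    Real.continuous_exp.comp (by continuity)
  have hint : IntervalIntegrable (fun r => φ r * Real.exp (a * (r - s)))
      MeasureTheory.volume s t := (hcont.mul hce).intervalIntegrable s t
  have hint1 : IntervalIntegrable (fun r => φ₁ * Real.exp (a * (r - s)))
      MeasureTheory.volume s t := ((continuous_const.mul hce)).intervalIntegrable s t
  have hint2 : IntervalIntegrable (fun r => φ₂ * Real.exp (a * (r - s)))
      MeasureTheory.volume s t := ((continuous_const.mul hce)).intervalIntegrable s t
  constructor
  · calc φ₁ * ((Real.exp (a * (t - s)) - 1) / a)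
        = ∫ r in s..t, φ₁ * Real.exp (a * (r - s)) := by
          rw [intervalIntegral.integral_const_mul, int_exp a s t ha]
      _ ≤ _ := by
          apply intervalIntegral.integral_mono_on hst hint1 hint
          intro r hr
          exact mul_le_mul_of_nonneg_right ((hbd r (hs.trans hr.1)).1) (Real.exp_nonneg _)
  · calc (∫ r in s..t, φ r * Real.exp (a * (r - s)))
        ≤ ∫ r in s..t, φ₂ * Real.exp (a * (r - s)) := by
          apply intervalIntegral.integral_mono_on hst hint hint2
          intro r hr
          exact mul_le_mul_of_nonneg_right ((hbd r (hs.trans hr.1)).2) (Real.exp_nonneg _)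
      _ = φ₂ * ((Real.exp (a * (t - s)) - 1) / a) := by
          rw [intervalIntegral.integral_const_mul, int_exp a s t ha]

theorem stmt7 (a φ₁ φ₂ : ℝ) (ha : 0 < a) (hφ₁ : 0 < φ₁) (hφ₁₂ : φ₁ ≤ φ₂)
    (φ : ℝ → ℝ) (hcont : Continuous φ)
    (hbd : ∀ r, 0 ≤ r → φ₁ ≤ φ r ∧ φ r ≤ φ₂)
    (x y t : ℝ) (hx : 0 < x) (hy : 0 < y) (ht : 0 ≤ t) :
    ∀ r, t ≤ r →
      mFn a φ x 0 t * mFn a φ y t r / mFn a φ x 0 r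
        ≤ (1 + (x / a) * φ₂) * (1 + (y / a) * φ₂) / min ((x / a) * φ₁) 1 := by
  intro r htr
  have hr0 : 0 ≤ r := ht.trans htr
  have hφ₂ : 0 < φ₂ := hφ₁.trans_le hφ₁₂
  set c := min ((x / a) * φ₁) 1 with hc
  have hcpos : 0 < c := lt_min (by positivity) one_pos
  -- bounds on exponentials
  have hEt : (1 : ℝ) ≤ Real.exp (a * (t - 0)) := Real.one_le_exp (by nlinarith)
  have hEtr : (1 : ℝ) ≤ Real.exp (a * (r - t)) := Real.one_le_exp (by nlinarith)
  have hEr : (1 : ℝ) ≤ Real.exp (a * (r - 0)) := Real.one_le_exp (by nlinarith)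
  -- generic upper bound for mFn
  have hupper : ∀ z s u, 0 < z → 0 ≤ s → s ≤ u →
      mFn a φ z s u ≤ (1 + (z / a) * φ₂) * Real.exp (a * (u - s)) := by
    intro z s u hz hs hsu
    have hb := (int_bounds a φ₁ φ₂ ha φ hcont hbd s u hs hsu).2
    have hE : (1 : ℝ) ≤ Real.exp (a * (u - s)) := Real.one_le_exp (by nlinarith)
    have h1 : mFn a φ z s u ≤ 1 + z * (φ₂ * ((Real.exp (a * (u - s)) - 1) / a)) := by
      unfold mFn
      nlinarith [hb]
    have h2 : 1 + z * (φ₂ * ((Real.exp (a * (u - s)) - 1) / a))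
        ≤ (1 + (z / a) * φ₂) * Real.exp (a * (u - s)) := by
      have hza : 0 ≤ (z / a) * φ₂ := by positivity
      have key : z * (φ₂ * ((Real.exp (a * (u - s)) - 1) / a))
          = (z / a) * φ₂ * (Real.exp (a * (u - s)) - 1) := by ring
      rw [key]
      nlinarith [hza, hE]
    linarith
  -- generic positivity / lower bound ≥ 1 is implied by lower int bound
  have hlow1 : ∀ z s u, 0 < z → 0 ≤ s → s ≤ u → (1 : ℝ) ≤ mFn a φ z s u := by
    intro z s u hz hs hsu
    have hb := (int_bounds a φ₁ φ₂ ha φ hcont hbd s u hs hsu).1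
    have hE : (1 : ℝ) ≤ Real.exp (a * (u - s)) := Real.one_le_exp (by nlinarith)
    have : 0 ≤ φ₁ * ((Real.exp (a * (u - s)) - 1) / a) :=
      mul_nonneg hφ₁.le (div_nonneg (by linarith) ha.le)
    unfold mFn
    nlinarith
  -- lower bound for denominator
  have hlower : c * Real.exp (a * (r - 0)) ≤ mFn a φ x 0 r := by
    have hb := (int_bounds a φ₁ φ₂ ha φ hcont hbd 0 r le_rfl hr0).1
    have h1 : 1 + (x / a) * φ₁ * (Real.exp (a * (r - 0)) - 1) ≤ mFn a φ x 0 r := by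
      unfold mFn
      have key : (x / a) * φ₁ * (Real.exp (a * (r - 0)) - 1)
          = x * (φ₁ * ((Real.exp (a * (r - 0)) - 1) / a)) := by ring
      nlinarith [hb]
    have h2 : c * Real.exp (a * (r - 0))
        ≤ 1 + (x / a) * φ₁ * (Real.exp (a * (r - 0)) - 1) := by
      rcases le_total ((x / a) * φ₁) 1 with h | h
      · rw [hc, min_eq_left h]
        nlinarith [hEr, mul_pos (div_pos hx ha) hφ₁]
      · rw [hc, min_eq_right h]
        nlinarith [hEr]
    linarith
  -- combine
  have hmt := hupper x 0 t hx le_rfl ht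
  have hmyr := hupper y t r hy ht htr
  have hmt1 := hlow1 x 0 t hx le_rfl ht
  have hmyr1 := hlow1 y t r hy ht htr
  have hden : 0 < mFn a φ x 0 r := lt_of_lt_of_le one_pos (hlow1 x 0 r hx le_rfl hr0)
  have hnum : mFn a φ x 0 t * mFn a φ y t r
      ≤ (1 + (x / a) * φ₂) * (1 + (y / a) * φ₂) * Real.exp (a * (r - 0)) := by
    have e : Real.exp (a * (t - 0)) * Real.exp (a * (r - t)) = Real.exp (a * (r - 0)) := by
      rw [← Real.exp_add]; ring_nf
    calc mFn a φ x 0 t * mFn a φ y t r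
        ≤ ((1 + (x / a) * φ₂) * Real.exp (a * (t - 0)))
          * ((1 + (y / a) * φ₂) * Real.exp (a * (r - t))) := by
          apply mul_le_mul hmt hmyr (by linarith) (by positivity)
      _ = (1 + (x / a) * φ₂) * (1 + (y / a) * φ₂)
          * (Real.exp (a * (t - 0)) * Real.exp (a * (r - t))) := by ring
      _ = _ := by rw [e]
  calc mFn a φ x 0 t * mFn a φ y t r / mFn a φ x 0 r
      ≤ ((1 + (x / a) * φ₂) * (1 + (y / a) * φ₂) * Real.exp (a * (r - 0)))
        / (c * Real.exp (a * (r - 0))) := by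
        apply div_le_div₀ (by positivity) hnum (by positivity) hlower
    _ = (1 + (x / a) * φ₂) * (1 + (y / a) * φ₂) / c := by
        rw [mul_div_mul_right _ _ (Real.exp_ne_zero _)]
end

section
/- Let a, x > 0 and 0 < φ₁ ≤ φ₂, and let φ : [0,∞) → ℝ be continuous with φ₁ ≤ φ ≤ φ₂. Set n(t) = 1 + x ∫_0^t φ(s)e^{as} ds, and let M : [0,∞) → ℝ satisfy M(t) = 1 + x ∫_0^t φ(s)e^{as}(2n(s) + 1) ds. Then for all t ≥ 0, M(t) ≤ (e^{2at}/a²)·(a² + φ₂x(a + 2φ₂x) + φ₂²x²). -/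
/-!
Since `n' = x φ(s) e^{as}`, the integrand of `M` times `x` is `n'(2n + 1) = (n² + n)'`.
Hence `M(t) = n(t)² + n(t) - 1` exactly, and the claim follows from
`0 ≤ n(t) ≤ 1 + (φ₂ x / a)(e^{at} - 1)` by elementary algebra in `E = e^{at} ≥ 1`.
-/

open Real intervalIntegral

theorem integral_mul_two_mul_add_one_eq {f f' : ℝ → ℝ} (hf : ∀ s, HasDerivAt f (f' s) s)
    (hf' : Continuous f') (a b : ℝ) :
    ∫ s in a..b, f' s * (2 * f s + 1) = (f b ^ 2 + f b) - (f a ^ 2 + f a) := by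
  have hfc : Continuous f := continuous_iff_continuousAt.2 fun s => (hf s).continuousAt
  have hint : Continuous fun s => f' s * (2 * f s + 1) := by fun_prop
  refine integral_eq_sub_of_hasDerivAt (f := fun s => f s ^ 2 + f s)
    (fun s _ => ?_) (hint.intervalIntegrable _ _)
  refine (((hf s).fun_pow 2).add (hf s)).congr_deriv ?_
  push_cast
  ring

theorem integral_exp_mul {c : ℝ} (hc : c ≠ 0) (t : ℝ) :
    ∫ s in (0:ℝ)..t, exp (c * s) = (exp (c * t) - 1) / c := by
  rw [integral_comp_mul_left (fun s => exp s) hc, integral_exp, mul_zero, exp_zero,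
    smul_eq_mul, inv_mul_eq_div]

theorem integral_mul_exp_le {g : ℝ → ℝ} {a c t : ℝ} (ha : a ≠ 0) (ht : 0 ≤ t)
    (hg : Continuous g) (hgc : ∀ s, 0 ≤ s → g s ≤ c) :
    ∫ s in (0:ℝ)..t, g s * exp (a * s) ≤ c * ((exp (a * t) - 1) / a) := by
  have hexp : Continuous fun s => exp (a * s) := by fun_prop
  calc ∫ s in (0:ℝ)..t, g s * exp (a * s)
      ≤ ∫ s in (0:ℝ)..t, c * exp (a * s) :=
        integral_mono_on ht ((hg.mul hexp).intervalIntegrable _ _)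
          ((continuous_const.mul hexp).intervalIntegrable _ _)
          fun s hs => mul_le_mul_of_nonneg_right (hgc s hs.1) (exp_pos _).le
    _ = c * ((exp (a * t) - 1) / a) := by rw [integral_const_mul, integral_exp_mul ha]

theorem sq_add_self_sub_one_le {n B E : ℝ} (hB : 0 ≤ B) (hE : 1 ≤ E) (hn : 0 ≤ n)
    (hnB : n ≤ 1 + B * (E - 1)) :
    n ^ 2 + n - 1 ≤ E ^ 2 * (1 + B + 3 * B ^ 2) := by
  have hquad : 0 ≤ E ^ 2 - 3 * E + 3 := by nlinarith [sq_nonneg (E - 3 / 2)]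
  have hsq : n ^ 2 ≤ (1 + B * (E - 1)) ^ 2 := pow_le_pow_left₀ hn hnB 2
  nlinarith [mul_nonneg hB hquad, mul_nonneg (sq_nonneg B) (sq_nonneg E),
    mul_nonneg (sq_nonneg B) (sub_nonneg.2 hE)]

theorem stmt16_general (a x φ₁ φ₂ : ℝ) (ha : 0 < a) (hx : 0 < x) (hφ₁ : 0 < φ₁)
    (φ : ℝ → ℝ) (hcont : Continuous φ)
    (hbd : ∀ r, 0 ≤ r → φ₁ ≤ φ r ∧ φ r ≤ φ₂)
    (M : ℝ → ℝ)
    (hM : ∀ t, 0 ≤ t → M t = 1 + x * ∫ s in (0:ℝ)..t,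
      φ s * Real.exp (a * s) * (2 * (1 + x * ∫ r in (0:ℝ)..s, φ r * Real.exp (a * r)) + 1)) :
    ∀ t, 0 ≤ t →
      M t ≤ (Real.exp (2 * a * t) / a ^ 2) *
        (a ^ 2 + φ₂ * x * (a + 2 * φ₂ * x) + φ₂ ^ 2 * x ^ 2) := by
  intro t ht
  set n : ℝ → ℝ := fun s => 1 + x * ∫ r in (0:ℝ)..s, φ r * exp (a * r) with hn
  have hφ : Continuous fun s => φ s * exp (a * s) := by fun_prop
  have hφ_nonneg : ∀ r, 0 ≤ r → 0 ≤ φ r := fun r hr => hφ₁.le.trans (hbd r hr).1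
  have hn_deriv : ∀ s, HasDerivAt n (x * (φ s * exp (a * s))) s := fun s =>
    ((hφ.integral_hasStrictDerivAt 0 s).hasDerivAt.const_mul x).const_add 1
  have hM_eq : M t = n t ^ 2 + n t - 1 :=
    calc M t = 1 + x * ∫ s in (0:ℝ)..t, φ s * exp (a * s) * (2 * n s + 1) := hM t ht
      _ = 1 + ∫ s in (0:ℝ)..t, x * (φ s * exp (a * s)) * (2 * n s + 1) := by
        simp only [mul_assoc, integral_const_mul]
      _ = n t ^ 2 + n t - 1 := by
        rw [integral_mul_two_mul_add_one_eq hn_deriv (continuous_const.mul hφ)]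
        simp only [hn, integral_same]
        ring
  have hn_nonneg : 0 ≤ n t :=
    add_nonneg zero_le_one <| mul_nonneg hx.le <| integral_nonneg ht fun r hr =>
      mul_nonneg (hφ_nonneg r hr.1) (exp_pos _).le
  have hn_le : n t ≤ 1 + φ₂ * x / a * (exp (a * t) - 1) := by
    have := integral_mul_exp_le ha.ne' ht hcont fun s hs => (hbd s hs).2
    calc n t = 1 + x * ∫ r in (0:ℝ)..t, φ r * exp (a * r) := rfl
      _ ≤ 1 + x * (φ₂ * ((exp (a * t) - 1) / a)) := by gcongr
      _ = _ := by ring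
  have hφ₂ : 0 ≤ φ₂ := (hφ_nonneg 0 le_rfl).trans (hbd 0 le_rfl).2
  calc M t ≤ exp (a * t) ^ 2 * (1 + φ₂ * x / a + 3 * (φ₂ * x / a) ^ 2) :=
        hM_eq ▸ sq_add_self_sub_one_le (by positivity) (one_le_exp (by positivity)) hn_nonneg hn_le
    _ = _ := by
        rw [sq, ← exp_add, ← two_mul, ← mul_assoc]
        field_simp
        ring

theorem stmt16 (a x φ₁ φ₂ : ℝ) (ha : 0 < a) (hx : 0 < x) (hφ₁ : 0 < φ₁)
    (hφ₁₂ : φ₁ ≤ φ₂) (φ : ℝ → ℝ) (hcont : Continuous φ)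
    (hbd : ∀ r, 0 ≤ r → φ₁ ≤ φ r ∧ φ r ≤ φ₂)
    (M : ℝ → ℝ)
    (hM : ∀ t, 0 ≤ t → M t = 1 + x * ∫ s in (0:ℝ)..t,
      φ s * Real.exp (a * s) * (2 * (1 + x * ∫ r in (0:ℝ)..s, φ r * Real.exp (a * r)) + 1)) :
    ∀ t, 0 ≤ t →
      M t ≤ (Real.exp (2 * a * t) / a ^ 2) *
        (a ^ 2 + φ₂ * x * (a + 2 * φ₂ * x) + φ₂ ^ 2 * x ^ 2) :=
  stmt16_general a x φ₁ φ₂ ha hx hφ₁ φ hcont hbd M hM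
end

section
/- Let 0 < ε < 1/2, let 0 < x₁ ≤ x₂, and let n ≥ 2 be an integer with ((1−ε)/ε)^{n−1} > x₂/x₁. Then there exist real numbers δ₁ ∈ (0,1) and δ₂ > 1 such that (δ₁/δ₂)^{n−1} ≥ ε/(1−ε) and δ₁^{n−1}(1−ε)^n x₁ − δ₂^{n−1} ε^n x₂ > 0. -/
theorem stmt17 (ε x₁ x₂ : ℝ) (n : ℕ) (hε : 0 < ε) (hε2 : ε < 1 / 2)
    (hx₁ : 0 < x₁) (hx₁₂ : x₁ ≤ x₂) (hn : 2 ≤ n)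
    (h : x₂ / x₁ < ((1 - ε) / ε) ^ (n - 1)) :
    ∃ δ₁ δ₂ : ℝ, 0 < δ₁ ∧ δ₁ < 1 ∧ 1 < δ₂ ∧
      ε / (1 - ε) ≤ (δ₁ / δ₂) ^ (n - 1) ∧
      0 < δ₁ ^ (n - 1) * (1 - ε) ^ n * x₁ - δ₂ ^ (n - 1) * ε ^ n * x₂ := by
  have h1ε : 0 < 1 - ε := by linarith
  set r : ℝ := ε / (1 - ε) with hr
  have hr0 : 0 < r := div_pos hε h1ε
  have hr1 : r < 1 := by rw [hr, div_lt_one h1ε]; linarith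
  have hm : (0 : ℝ) < ((n - 1 : ℕ) : ℝ) := by
    have : 1 ≤ n - 1 := by omega
    exact_mod_cast Nat.lt_of_lt_of_le Nat.zero_lt_one this
  set c : ℝ := r ^ (((n - 1 : ℕ) : ℝ))⁻¹ with hc
  have hc0 : 0 < c := Real.rpow_pos_of_pos hr0 _
  have hc1 : c < 1 := Real.rpow_lt_one hr0.le hr1 (by positivity)
  have hcn : c ^ (n - 1) = r := by
    rw [hc, ← Real.rpow_natCast (r ^ _) (n - 1), ← Real.rpow_mul hr0.le,
      inv_mul_cancel₀ (ne_of_gt hm), Real.rpow_one]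
  refine ⟨(c + 1) / 2, (c + 1) / (2 * c), by linarith, by linarith, ?_, ?_, ?_⟩
  · rw [lt_div_iff₀ (by positivity)]; linarith
  · have hq : (c + 1) / 2 / ((c + 1) / (2 * c)) = c := by
      field_simp
    rw [hq, hcn]
  · have hkey : ε ^ n * x₂ < ε * (1 - ε) ^ (n - 1) * x₁ := by
      have h2 : x₂ < ((1 - ε) / ε) ^ (n - 1) * x₁ := by
        rwa [div_lt_iff₀ hx₁] at h
      have h3 : ε ^ (n - 1) * x₂ < (1 - ε) ^ (n - 1) * x₁ := by
        have := mul_lt_mul_of_pos_left h2 (pow_pos hε (n - 1))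
        calc ε ^ (n - 1) * x₂ < ε ^ (n - 1) * (((1 - ε) / ε) ^ (n - 1) * x₁) := this
          _ = (1 - ε) ^ (n - 1) * x₁ := by
              rw [div_pow, ← mul_assoc, mul_div_cancel₀]
              exact pow_ne_zero _ (ne_of_gt hε)
      have hεn : ε ^ n = ε * ε ^ (n - 1) := by
        conv_lhs => rw [show n = (n - 1) + 1 by omega]
        ring
      calc ε ^ n * x₂ = ε * (ε ^ (n - 1) * x₂) := by rw [hεn]; ring
        _ < ε * ((1 - ε) ^ (n - 1) * x₁) := by
            exact mul_lt_mul_of_pos_left h3 hε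
        _ = ε * (1 - ε) ^ (n - 1) * x₁ := by ring
    have hδ₁ : (c + 1) / 2 = c * ((c + 1) / (2 * c)) := by
      field_simp
    have hd2 : (0 : ℝ) < (c + 1) / (2 * c) := by positivity
    have expand : ((c + 1) / 2) ^ (n - 1) * (1 - ε) ^ n * x₁ -
        ((c + 1) / (2 * c)) ^ (n - 1) * ε ^ n * x₂ =
        ((c + 1) / (2 * c)) ^ (n - 1) *
          (r * ((1 - ε) ^ n * x₁) - ε ^ n * x₂) := by
      rw [hδ₁, mul_pow, hcn]; ring
    rw [expand]
    have hr1ε : r * ((1 - ε) ^ n * x₁) = ε * (1 - ε) ^ (n - 1) * x₁ := by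
      have hεn : (1 - ε) ^ n = (1 - ε) * (1 - ε) ^ (n - 1) := by
        conv_lhs => rw [show n = (n - 1) + 1 by omega]
        ring
      rw [hr, hεn]
      field_simp
    rw [hr1ε]
    have : 0 < ε * (1 - ε) ^ (n - 1) * x₁ - ε ^ n * x₂ := by linarith
    positivity
end

section
/- Let a, φ₁, φ₂ > 0 with φ₁ ≤ φ₂, 0 < ε < 1/2, and let φ : [0,∞) → ℝ be continuous with φ₁ ≤ φ ≤ φ₂. Fix 0 ≤ s ≤ t and set Φ = ∫_s^t φ(r)e^{a(r−s)} dr ≥ 0. Define, for x > 0, the generator action on V₁(x) = x by A(x) = a x + (2φ(s)/((1−2ε))) ∫_{εx}^{(1−ε)x} (y − x)·(1 + yΦ)/(1 + xΦ) dy. Then A(x) ≤ −a x + 3a²/(φ₁(1 + 2ε − 2ε²)) for all x > 0. -/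
/-!
The inner integral is an explicit polynomial in `x`: with `c = 1 + 2ε - 2ε²`,
`∫_{εx}^{(1-ε)x} (y - x)(1 + yΦ) dy = -(1 - 2ε) x² (3 + cΦx) / 6`.
Since `c ≤ 3`, dividing by `1 + xΦ` leaves at least `c x² / 3`, so the splitting part of the
generator is at most `-φ₁ c x² / 3`, and `2ax ≤ k x² + a² / k` with `k = φ₁ c / 3` closes the bound.
-/

open intervalIntegral

lemma integral_sub_mul_one_add_mul (x Φ ε : ℝ) :
    ∫ y in (ε * x)..((1 - ε) * x), (y - x) * (1 + y * Φ)
      = -((1 - 2 * ε) * x ^ 2 * (3 + Φ * x * (1 + 2 * ε - 2 * ε ^ 2)) / 6) := by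
  have hderiv : ∀ y ∈ Set.uIcc (ε * x) ((1 - ε) * x),
      HasDerivAt (fun y ↦ Φ * y ^ 3 / 3 + (1 - Φ * x) * y ^ 2 / 2 - x * y)
        ((y - x) * (1 + y * Φ)) y := by
    intro y _
    have h := (((hasDerivAt_pow 3 y).const_mul Φ).div_const 3).add
      (((hasDerivAt_pow 2 y).const_mul (1 - Φ * x)).div_const 2) |>.sub
      ((hasDerivAt_id y).const_mul x)
    exact h.congr_deriv (by push_cast; ring)
  rw [integral_eq_sub_of_hasDerivAt hderiv (by apply Continuous.intervalIntegrable; fun_prop)]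
  ring

lemma splitting_term_le {P Φ ε x : ℝ} (hP : 0 ≤ P) (hΦ : 0 ≤ Φ) (hx : 0 ≤ x)
    (hε : ε ≠ 1 / 2) :
    2 * P / (1 - 2 * ε) * (-((1 - 2 * ε) * x ^ 2 * (3 + Φ * x * (1 + 2 * ε - 2 * ε ^ 2)) / 6)
        / (1 + x * Φ))
      ≤ -(P * (1 + 2 * ε - 2 * ε ^ 2) / 3 * x ^ 2) := by
  set c := 1 + 2 * ε - 2 * ε ^ 2
  have hc : c ≤ 3 := by nlinarith [sq_nonneg (2 * ε - 1)]
  have hden : 0 < 1 + x * Φ := by positivity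
  have hcancel : 2 * P / (1 - 2 * ε) * (-((1 - 2 * ε) * x ^ 2 * (3 + Φ * x * c) / 6)
      / (1 + x * Φ)) = -(P * x ^ 2 * (3 + Φ * x * c) / (3 * (1 + x * Φ))) := by
    have : 1 - 2 * ε ≠ 0 := fun h ↦ hε (by linarith)
    field_simp
    ring
  rw [hcancel, neg_le_neg_iff, le_div_iff₀ (by positivity)]
  have hweight : c * (1 + x * Φ) ≤ 3 + Φ * x * c := by nlinarith [mul_nonneg hx hΦ]
  nlinarith [mul_le_mul_of_nonneg_left hweight (mul_nonneg hP (sq_nonneg x))]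

lemma mul_sub_mul_sq_le_neg_mul_add_sq_div (a k x : ℝ) (hk : 0 < k) :
    a * x - k * x ^ 2 ≤ -a * x + a ^ 2 / k := by
  have hsq : -a * x + a ^ 2 / k - (a * x - k * x ^ 2) = (a - k * x) ^ 2 / k := by
    field_simp
    ring
  rw [← sub_nonneg, hsq]
  positivity

theorem stmt19_general (a φ₁ φ₂ ε s t : ℝ) (hφ₁ : 0 < φ₁)
    (hε : 0 < ε) (hε2 : ε < 1 / 2)
    (φ : ℝ → ℝ)
    (hbd : ∀ r, 0 ≤ r → φ₁ ≤ φ r ∧ φ r ≤ φ₂)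
    (hs : 0 ≤ s) (hst : s ≤ t) :
    ∀ x : ℝ, 0 < x →
      a * x + (2 * φ s / (1 - 2 * ε)) *
          ∫ y in (ε * x)..((1 - ε) * x),
            (y - x) * (1 + y * ∫ r in s..t, φ r * Real.exp (a * (r - s))) /
              (1 + x * ∫ r in s..t, φ r * Real.exp (a * (r - s)))
        ≤ -a * x + 3 * a ^ 2 / (φ₁ * (1 + 2 * ε - 2 * ε ^ 2)) := by
  intro x hx
  set Φ := ∫ r in s..t, φ r * Real.exp (a * (r - s))
  have hΦ : 0 ≤ Φ := integral_nonneg hst fun r hr ↦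
    mul_nonneg (hφ₁.le.trans (hbd r (hs.trans hr.1)).1) (Real.exp_pos _).le
  have hφs : φ₁ ≤ φ s := (hbd s hs).1
  set c := 1 + 2 * ε - 2 * ε ^ 2
  have hc : 0 < c := by nlinarith
  have hsplit := splitting_term_le (hφ₁.le.trans hφs) hΦ hx.le hε2.ne
  have hφ₁_le : φ₁ * c / 3 * x ^ 2 ≤ φ s * c / 3 * x ^ 2 := by gcongr
  rw [integral_div, integral_sub_mul_one_add_mul]
  calc a * x + _ ≤ a * x - φ₁ * c / 3 * x ^ 2 := by linarith
    _ ≤ -a * x + a ^ 2 / (φ₁ * c / 3) :=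
      mul_sub_mul_sq_le_neg_mul_add_sq_div a _ x (by positivity)
    _ = -a * x + 3 * a ^ 2 / (φ₁ * c) := by rw [div_div_eq_mul_div, mul_comm (a ^ 2)]

theorem stmt19 (a φ₁ φ₂ ε s t : ℝ) (ha : 0 < a) (hφ₁ : 0 < φ₁) (hφ₁₂ : φ₁ ≤ φ₂)
    (hε : 0 < ε) (hε2 : ε < 1 / 2)
    (φ : ℝ → ℝ) (hcont : Continuous φ)
    (hbd : ∀ r, 0 ≤ r → φ₁ ≤ φ r ∧ φ r ≤ φ₂)
    (hs : 0 ≤ s) (hst : s ≤ t) :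
    ∀ x : ℝ, 0 < x →
      a * x + (2 * φ s / (1 - 2 * ε)) *
          ∫ y in (ε * x)..((1 - ε) * x),
            (y - x) * (1 + y * ∫ r in s..t, φ r * Real.exp (a * (r - s))) /
              (1 + x * ∫ r in s..t, φ r * Real.exp (a * (r - s)))
        ≤ -a * x + 3 * a ^ 2 / (φ₁ * (1 + 2 * ε - 2 * ε ^ 2)) :=
  stmt19_general a φ₁ φ₂ ε s t hφ₁ hε hε2 φ hbd hs hst
end
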